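/- arXiv:1804.09832 — 4 statements merged into one kernel-verified Lean document; each statement's English description precedes it below -/
import Mathlib

section
/- Let E = {x ∈ ℝⁿ : A x ≤ b} be a convex polyhedron and w ∈ E. Then the normal cone N_w(E) equals the set of all nonnegative linear combinations ∑_{i ∈ J(w)} λ_i a_i with λ_i ≥ 0, where a_i is the vector representing the i-th row of A (i.e. A_i x = ⟨a_i, x⟩) and J(w) is the set of active constraints at w. -/
open Filter Topology Metric Set

noncomputable section

abbrev Euc (n : ℕ) := EuclideanSpace ℝ (Fin n)

/-- Peano tangent cone of `E` at `a`. -/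
def PeanoTangentCone {n : ℕ} (E : Set (Euc n)) (a : Euc n) : Set (Euc n) :=
  {v | ∃ (x : ℕ → Euc n) (l : ℕ → ℝ), (∀ k, x k ∈ E) ∧ (∀ k, 0 < l k) ∧
    Tendsto x atTop (𝓝 a) ∧ Tendsto (fun k => l k • (x k - a)) atTop (𝓝 v)}

/-- Normal cone of `E` at `a` (polar of the Peano tangent cone). -/
def NormalCone {n : ℕ} (E : Set (Euc n)) (a : Euc n) : Set (Euc n) :=
  {u | ∀ v ∈ PeanoTangentCone E a, inner ℝ v u ≤ (0 : ℝ)}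

/-- Extremal point of a set. -/
def IsExtremal {n : ℕ} (F : Set (Euc n)) (x₀ : Euc n) : Prop :=
  x₀ ∈ F ∧ ∀ x₁ ∈ F, ∀ x₂ ∈ F, ∀ t : ℝ, 0 < t → t < 1 →
    x₀ = (1 - t) • x₁ + t • x₂ → x₁ = x₂

/-- Kuratowski lower limit of a sequence of sets. -/
def KurLiminf {X : Type*} [TopologicalSpace X] (E : ℕ → Set X) : Set X :=
  {x | ∃ y : ℕ → X, (∀ k, y k ∈ E k) ∧ Tendsto y atTop (𝓝 x)}

/-- Kuratowski upper limit of a sequence of sets. -/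
def KurLimsup {X : Type*} [TopologicalSpace X] (E : ℕ → Set X) : Set X :=
  {x | ∃ (φ : ℕ → ℕ) (y : ℕ → X), StrictMono φ ∧ (∀ k, y k ∈ E (φ k)) ∧ Tendsto y atTop (𝓝 x)}

/-- Kuratowski convergence of a sequence of sets to `F`. -/
def KurConv {X : Type*} [TopologicalSpace X] (E : ℕ → Set X) (F : Set X) : Prop :=
  KurLiminf E = F ∧ KurLimsup E = F

/-! Feasible directions `w + t • v` stay in the polyhedron for small `t > 0` as soon as `v`
satisfies the active constraints `⟪a i, v⟫ ≤ 0`, since the inactive ones hold strictly at `w`;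
conversely, tangent vectors satisfy the active constraints in the limit. So the normal cone is the
polar of the cone cut out by the active constraints, which by Farkas' lemma is the cone spanned by
the active `a i`. Farkas' lemma needs that cone to be closed: by Carathéodory's theorem it is a
finite union of cones spanned by linearly independent vectors, each the image of an orthant under
a linear embedding. -/

open scoped RealInnerProductSpace

section ConeSpan

variable {ι F : Type*} [Fintype ι] [AddCommGroup F] [Module ℝ F]

def coneSpan (a : ι → F) (s : Set ι) : PointedCone ℝ F where
  carrier := {x | ∃ l : ι → ℝ, (∀ i, 0 ≤ l i) ∧ (∀ i ∉ s, l i = 0) ∧ x = ∑ i, l i • a i}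
  zero_mem' := ⟨0, fun _ => le_rfl, fun _ _ => rfl, by simp⟩
  add_mem' := by
    rintro _ _ ⟨l, hl, hls, rfl⟩ ⟨l', hl', hls', rfl⟩
    refine ⟨l + l', fun i => add_nonneg (hl i) (hl' i), fun i hi => ?_, ?_⟩
    · simp [hls i hi, hls' i hi]
    · simp [add_smul, Finset.sum_add_distrib]
  smul_mem' := by
    rintro c _ ⟨l, hl, hls, rfl⟩
    refine ⟨(c : ℝ) • l, fun i => mul_nonneg c.2 (hl i), fun i hi => by simp [hls i hi], ?_⟩
    simp only [Finset.smul_sum, Pi.smul_apply, smul_eq_mul, mul_smul]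
    rfl

variable {a : ι → F} {s t : Set ι} {x : F}

lemma mem_coneSpan_of_mem {i : ι} (hi : i ∈ s) : a i ∈ coneSpan a s := by
  classical
  refine ⟨Pi.single i 1, fun j => ?_,
    fun j hj => Pi.single_eq_of_ne (ne_of_mem_of_not_mem hi hj).symm 1, by simp [Pi.single_apply]⟩
  by_cases h : j = i <;> simp [h]

lemma coneSpan_mono (h : s ⊆ t) : coneSpan a s ≤ coneSpan a t := by
  rintro x ⟨l, hl, hls, rfl⟩
  exact ⟨l, hl, fun i hi => hls i (fun his => hi (h his)), rfl⟩

/-- Subtracting the largest multiple of a positive dependence `μ` that keeps the coefficients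
nonnegative kills at least one of them. -/
lemma exists_mem_coneSpan_diff_singleton (hx : x ∈ coneSpan a s) {μ : ι → ℝ}
    (hμs : ∀ i ∉ s, μ i = 0) (hμ : ∑ i, μ i • a i = 0) (hpos : ∃ i, 0 < μ i) :
    ∃ j ∈ s, x ∈ coneSpan a (s \ {j}) := by
  classical
  obtain ⟨l, hl, hls, rfl⟩ := hx
  obtain ⟨i₀, hi₀⟩ := hpos
  obtain ⟨j, hjpos, hjmin⟩ := Finset.exists_min_image {i | 0 < μ i} (fun i => l i / μ i)
    ⟨i₀, (Finset.mem_filter_univ i₀).mpr hi₀⟩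
  rw [Finset.mem_filter_univ] at hjpos
  have hjs : j ∈ s := by_contra fun h => hjpos.ne' (hμs j h)
  set r := l j / μ j
  have hr : 0 ≤ r := div_nonneg (hl j) hjpos.le
  refine ⟨j, hjs, fun i => l i - r * μ i, fun i => ?_, fun i hi => ?_, ?_⟩
  · rcases lt_or_ge 0 (μ i) with hμi | hμi
    · have := (le_div_iff₀ hμi).mp (hjmin i ((Finset.mem_filter_univ i).mpr hμi))
      linarith
    · linarith [hl i, mul_nonpos_of_nonneg_of_nonpos hr hμi]
  · by_cases hij : i = j
    · simp [hij, r, hjpos.ne']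
    · have his : i ∉ s := fun h => hi ⟨h, hij⟩
      simp [hls i his, hμs i his]
  · simp only [sub_smul, Finset.sum_sub_distrib, mul_smul, ← Finset.smul_sum, hμ, smul_zero,
      sub_zero]

/-- Carathéodory's theorem for cones. -/
lemma exists_linearIndepOn_of_mem_coneSpan (hx : x ∈ coneSpan a s) :
    ∃ t ⊆ s, LinearIndepOn ℝ a t ∧ x ∈ coneSpan a t := by
  induction s using WellFoundedLT.induction with
  | ind s ih =>
  by_cases hind : LinearIndepOn ℝ a s
  · exact ⟨s, subset_rfl, hind, hx⟩
  obtain ⟨l, hls, hl, hl0⟩ : ∃ l ∈ Finsupp.supported ℝ ℝ s,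
      Finsupp.linearCombination ℝ a l = 0 ∧ l ≠ 0 := by
    simpa [linearIndepOn_iff] using hind
  obtain ⟨i, hi⟩ : ∃ i, l i ≠ 0 := by simpa [Finsupp.ext_iff] using hl0
  have hsum : ∑ i, l i • a i = 0 := by
    rwa [Finsupp.linearCombination_apply, Finsupp.sum_fintype _ _ (by simp)] at hl
  have hsupp : ∀ i ∉ s, l i = 0 := fun i his => Finsupp.notMem_support_iff.mp fun h => his (hls h)
  obtain ⟨j, hjs, hxj⟩ : ∃ j ∈ s, x ∈ coneSpan a (s \ {j}) := by
    rcases hi.lt_or_gt with hneg | hpos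
    · exact exists_mem_coneSpan_diff_singleton hx (μ := -⇑l) (by simpa using hsupp)
        (by simp [neg_smul, hsum]) ⟨i, by simpa using hneg⟩
    · exact exists_mem_coneSpan_diff_singleton hx hsupp hsum ⟨i, hpos⟩
  obtain ⟨t, hts, ht, hxt⟩ := ih (s \ {j}) (Set.sdiff_singleton_ssubset.mpr hjs) hxj
  exact ⟨t, hts.trans sdiff_subset, ht, hxt⟩

lemma coneSpan_eq_image [Fintype t] :
    (coneSpan a t : Set F) =
      Fintype.linearCombination ℝ (fun i : t => a i) '' {g | ∀ i, 0 ≤ g i} := by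
  classical
  have sum_coe : ∀ l : ι → ℝ, (∀ i ∉ t, l i = 0) →
      ∑ i : t, l i • a i = ∑ i, l i • a i := fun l hlt => by
    rw [Finset.sum_set_coe (f := fun i => l i • a i)]
    exact Finset.sum_subset (Finset.subset_univ _) fun i _ hi => by
      simp [hlt i (by simpa using hi)]
  ext x
  constructor
  · rintro ⟨l, hl, hlt, rfl⟩
    exact ⟨fun i => l i, fun i => hl i, sum_coe l hlt⟩
  · rintro ⟨g, hg, rfl⟩
    refine ⟨fun i => if h : i ∈ t then g ⟨i, h⟩ else 0, fun i => ?_, fun i hi => dif_neg hi, ?_⟩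
    · dsimp only
      split_ifs
      exacts [hg _, le_rfl]
    · rw [← sum_coe _ fun i hi => dif_neg hi]
      exact Finset.sum_congr rfl fun i _ => by rw [dif_pos i.2]

variable [TopologicalSpace F] [IsTopologicalAddGroup F] [ContinuousSMul ℝ F] [T2Space F]

lemma isClosed_coneSpan_of_linearIndepOn (ht : LinearIndepOn ℝ a t) :
    IsClosed (coneSpan a t : Set F) := by
  classical
  rw [coneSpan_eq_image]
  refine (LinearMap.isClosedEmbedding_of_injective ?_).isClosedMap _ ?_
  · exact LinearMap.ker_eq_bot.mpr
      (linearIndependent_iff_injective_fintypeLinearCombination.mp ht)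
  · exact isClosed_Ici (a := 0)

lemma isClosed_coneSpan (a : ι → F) (s : Set ι) : IsClosed (coneSpan a s : Set F) := by
  have : (coneSpan a s : Set F) = ⋃ t ∈ {t | t ⊆ s ∧ LinearIndepOn ℝ a t}, coneSpan a t := by
    refine Set.Subset.antisymm (fun x hx => ?_) (Set.iUnion₂_subset fun t ht => coneSpan_mono ht.1)
    obtain ⟨t, hts, ht, hxt⟩ := exists_linearIndepOn_of_mem_coneSpan hx
    exact Set.mem_biUnion ⟨hts, ht⟩ hxt
  rw [this]
  exact (Set.toFinite _).isClosed_biUnion fun t ht => isClosed_coneSpan_of_linearIndepOn ht.2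

end ConeSpan

section Farkas

variable {ι F : Type*} [Fintype ι] [NormedAddCommGroup F] [InnerProductSpace ℝ F] [CompleteSpace F]
  {a : ι → F} {s : Set ι} {u : F}

theorem mem_coneSpan_iff_forall_inner_nonpos :
    u ∈ coneSpan a s ↔ ∀ v, (∀ i ∈ s, ⟪a i, v⟫ ≤ 0) → ⟪v, u⟫ ≤ 0 := by
  constructor
  · rintro ⟨l, hl, hls, rfl⟩ v hv
    rw [inner_sum]
    refine Finset.sum_nonpos fun i _ => ?_
    rw [real_inner_smul_right, real_inner_comm]
    by_cases hi : i ∈ s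
    · exact mul_nonpos_of_nonneg_of_nonpos (hl i) (hv i hi)
    · simp [hls i hi]
  · intro hu
    by_contra hnot
    obtain ⟨y, hy, hyu⟩ :=
      ProperCone.hyperplane_separation' (C := ⟨coneSpan a s, isClosed_coneSpan a s⟩) hnot
    have := hu (-y) fun i hi => by
      simpa [inner_neg_right] using hy (a i) (mem_coneSpan_of_mem hi)
    rw [inner_neg_left, real_inner_comm] at this
    linarith

end Farkas

section TangentCone

variable {n : ℕ} {E : Set (Euc n)} {w v : Euc n}

lemma mem_peanoTangentCone_of_eventually_add_smul_mem
    (h : ∀ᶠ t in 𝓝[>] (0 : ℝ), w + t • v ∈ E) : v ∈ PeanoTangentCone E w := by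
  obtain ⟨t, ht, htE⟩ := exists_seq_forall_of_frequently (h.and self_mem_nhdsWithin).frequently
  have ht0 : Tendsto t atTop (𝓝 0) := ht.mono_right nhdsWithin_le_nhds
  refine ⟨fun k => w + t k • v, fun k => (t k)⁻¹, fun k => (htE k).1,
    fun k => inv_pos.mpr (htE k).2, ?_, ?_⟩
  · simpa using tendsto_const_nhds.add (ht0.smul_const v)
  · refine tendsto_const_nhds.congr fun k => ?_
    rw [add_sub_cancel_left, smul_smul, inv_mul_cancel₀ (htE k).2.ne', one_smul]

lemma inner_nonpos_of_mem_peanoTangentCone {a : Euc n} {β : ℝ} (hE : E ⊆ {x | ⟪a, x⟫ ≤ β})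
    (hw : ⟪a, w⟫ = β) (hv : v ∈ PeanoTangentCone E w) : ⟪a, v⟫ ≤ 0 := by
  obtain ⟨x, l, hxE, hl, -, hlim⟩ := hv
  refine le_of_tendsto (tendsto_const_nhds.inner hlim) (Eventually.of_forall fun k => ?_)
  rw [real_inner_smul_right, inner_sub_right, hw]
  exact mul_nonpos_of_nonneg_of_nonpos (hl k).le (sub_nonpos.mpr (hE (hxE k)))

theorem peanoTangentCone_polyhedron {ι : Type*} [Finite ι] (a : ι → Euc n) (b : ι → ℝ)
    (hw : ∀ i, ⟪a i, w⟫ ≤ b i) :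
    PeanoTangentCone {x | ∀ i, ⟪a i, x⟫ ≤ b i} w = {v | ∀ i, ⟪a i, w⟫ = b i → ⟪a i, v⟫ ≤ 0} := by
  ext v
  refine ⟨fun hv i hi => inner_nonpos_of_mem_peanoTangentCone (fun _ hx => by exact hx i) hi hv,
    fun hv => mem_peanoTangentCone_of_eventually_add_smul_mem (eventually_all.mpr fun i => ?_)⟩
  rcases (hw i).eq_or_lt with hi | hi
  · filter_upwards [self_mem_nhdsWithin] with t (ht : 0 < t)
    rw [inner_add_right, real_inner_smul_right, hi]
    linarith [mul_nonpos_of_nonneg_of_nonpos ht.le (hv i hi)]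
  · have hcont : Continuous fun t : ℝ => ⟪a i, w + t • v⟫ := by fun_prop
    exact ((hcont.tendsto' 0 _ (by simp)).eventually_le_const hi).filter_mono nhdsWithin_le_nhds

end TangentCone

theorem stmt_3 {n m : ℕ} (a : Fin m → Euc n) (b : Fin m → ℝ)
    (E : Set (Euc n)) (hE : E = {x | ∀ i, inner ℝ (a i) x ≤ b i})
    (w : Euc n) (hw : w ∈ E) :
    NormalCone E w =
      {u | ∃ l : Fin m → ℝ, (∀ i, 0 ≤ l i) ∧
        (∀ i, inner ℝ (a i) w ≠ b i → l i = 0) ∧ u = ∑ i, l i • a i} := by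
  subst hE
  ext u
  rw [NormalCone, peanoTangentCone_polyhedron a b hw]
  -- the right-hand side is `coneSpan a {i | ⟪a i, w⟫ = b i}` unfolded
  exact mem_coneSpan_iff_forall_inner_nonpos.symm
end
end

section
/- Let A : ℝⁿ → ℝᵐ be a linear map of rank n defining a (possibly unbounded) nonempty polyhedron E = {x : A x ≤ b}, and let c ∈ ℝⁿ. Then the linear functional f(x) = ⟨c, x⟩ attains its minimum on E if and only if −c belongs to the union over all vertices w ∈ E* of the normal cones N_w(E). Moreover, the minimum is attained exactly at those vertices w with −c ∈ N_w(E). -/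
open Filter Topology Metric Set

noncomputable section

/-!
For convex `E`, every `x - w` with `x ∈ E` is a tangent direction at `w`, so `w` minimizes
`⟪c, ·⟫` on `E` exactly when `-c` lies in the normal cone at `w`. It remains to produce a minimizing
vertex from any minimizer. Take a minimizer whose set of active constraints is maximal. If the
active normals did not span, there would be a direction `d` orthogonal to them; by the rank
assumption `d` is not orthogonal to every `a i`, and choosing the sign of `d` (a recession
direction cannot decrease `⟪c, ·⟫`) the ratio test moves along `d` to a minimizer with strictly more
active constraints. So the active normals span, and then a segment through the point must lie in
the affine subspace cut out by the active constraints, which is a single point.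
-/

open scoped RealInnerProductSpace

section InnerProductSpace

variable {F : Type*} [NormedAddCommGroup F] [InnerProductSpace ℝ F]

lemma mem_orthogonal_span_iff {S : Set F} {v : F} :
    v ∈ (Submodule.span ℝ S)ᗮ ↔ ∀ u ∈ S, ⟪u, v⟫ = 0 := by
  rw [← Submodule.span_singleton_le_iff_mem, ← Submodule.isOrtho_iff_le, Submodule.isOrtho_comm,
    Submodule.isOrtho_span]
  simp

lemma exists_forall_inner_eq_zero_exists_inner_ne_zero {ι : Type*} [Finite ι] {a : ι → F}
    (hrank : Submodule.span ℝ (range a) = ⊤) {S : Set ι} (hS : Submodule.span ℝ (a '' S) ≠ ⊤) :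
    ∃ d, (∀ i ∈ S, ⟪a i, d⟫ = 0) ∧ ∃ j, ⟪a j, d⟫ ≠ 0 := by
  have : FiniteDimensional ℝ (Submodule.span ℝ (a '' S)) :=
    FiniteDimensional.span_of_finite ℝ (Set.toFinite _)
  obtain ⟨d, hd, hd0⟩ :=
    Submodule.exists_mem_ne_zero_of_ne_bot (mt Submodule.orthogonal_eq_bot_iff.1 hS)
  rw [mem_orthogonal_span_iff, Set.forall_mem_image] at hd
  refine ⟨d, hd, ?_⟩
  by_contra! h
  have hd_orth : d ∈ (Submodule.span ℝ (range a))ᗮ :=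
    mem_orthogonal_span_iff.2 (Set.forall_mem_range.2 h)
  rw [hrank, Submodule.top_orthogonal_eq_bot, Submodule.mem_bot] at hd_orth
  exact hd0 hd_orth

end InnerProductSpace

section Polyhedron

variable {F : Type*} [NormedAddCommGroup F] [InnerProductSpace ℝ F] {m : ℕ}

def polyhedron (a : Fin m → F) (b : Fin m → ℝ) : Set F := {x | ∀ i, ⟪a i, x⟫ ≤ b i}

def activeSet (a : Fin m → F) (b : Fin m → ℝ) (x : F) : Finset (Fin m) := {i | ⟪a i, x⟫ = b i}

lemma convex_polyhedron (a : Fin m → F) (b : Fin m → ℝ) : Convex ℝ (polyhedron a b) := by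
  rw [polyhedron, Set.ofPred_forall]
  exact convex_iInter fun i => convex_halfSpace_le (innerₛₗ ℝ (a i)).isLinear (b i)

variable {a : Fin m → F} {b : Fin m → ℝ}

lemma exists_add_smul_mem_activeSet_ssubset {x s : F} (hx : x ∈ polyhedron a b)
    (hs : ∀ i ∈ activeSet a b x, ⟪a i, s⟫ = 0) (hj : ∃ j, 0 < ⟪a j, s⟫) :
    ∃ T : ℝ, 0 ≤ T ∧ x + T • s ∈ polyhedron a b ∧ activeSet a b x ⊂ activeSet a b (x + T • s) := by
  obtain ⟨j, hj⟩ := hj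
  -- ratio test: `T` is the first time the ray `x + T • s` meets a new constraint
  obtain ⟨k, hk, hk_min⟩ := Finset.exists_min_image {i | 0 < ⟪a i, s⟫}
    (fun i => (b i - ⟪a i, x⟫) / ⟪a i, s⟫) ⟨j, by simpa using hj⟩
  simp only [Finset.mem_filter, Finset.mem_univ, true_and] at hk hk_min
  set T := (b k - ⟪a k, x⟫) / ⟪a k, s⟫
  have hT : 0 ≤ T := div_nonneg (sub_nonneg.2 (hx k)) hk.le
  have hray : ∀ i, ⟪a i, x + T • s⟫ = ⟪a i, x⟫ + T * ⟪a i, s⟫ := fun i => by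
    rw [inner_add_right, real_inner_smul_right]
  refine ⟨T, hT, fun i => ?_, (Finset.ssubset_iff_of_subset fun i hi => ?_).2 ⟨k, ?_, ?_⟩⟩
  · rw [hray]
    rcases lt_or_ge 0 ⟪a i, s⟫ with hi | hi
    · linarith [(le_div_iff₀ hi).1 (hk_min i hi)]
    · nlinarith [hx i]
  · simp only [activeSet, Finset.mem_filter, Finset.mem_univ, true_and] at hi ⊢
    rw [hray, hs i (by simpa [activeSet] using hi), mul_zero, add_zero, hi]
  · simp only [activeSet, Finset.mem_filter, Finset.mem_univ, true_and, hray, T]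
    rw [div_mul_cancel₀ _ hk.ne']
    ring
  · exact fun hk_act => hk.ne' (hs k hk_act)

lemma exists_descent_direction {c x : F} (hrank : Submodule.span ℝ (range a) = ⊤)
    (hx : x ∈ polyhedron a b) (hmin : IsMinOn (⟪c, ·⟫) (polyhedron a b) x)
    (hspan : Submodule.span ℝ (a '' activeSet a b x) ≠ ⊤) :
    ∃ s, ⟪c, s⟫ ≤ 0 ∧ (∀ i ∈ activeSet a b x, ⟪a i, s⟫ = 0) ∧ ∃ j, 0 < ⟪a j, s⟫ := by
  obtain ⟨d, hd, j, hj⟩ := exists_forall_inner_eq_zero_exists_inner_ne_zero hrank hspan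
  wlog hcd : ⟪c, d⟫ ≤ 0 generalizing d
  · exact this (-d) (by simpa using hd) (by simpa using hj) (by rw [inner_neg_right]; linarith)
  by_cases hpos : ∃ j, 0 < ⟪a j, d⟫
  · exact ⟨d, hcd, hd, hpos⟩
  push Not at hpos
  have hcd' : 0 ≤ ⟪c, d⟫ := by
    have hxd : x + d ∈ polyhedron a b := fun i => by
      rw [inner_add_right]
      linarith [hx i, hpos i]
    have := isMinOn_iff.1 hmin _ hxd
    simp only [inner_add_right] at this
    linarith
  refine ⟨-d, by rw [inner_neg_right]; linarith, by simpa using hd, j, ?_⟩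
  rw [inner_neg_right]
  exact neg_pos.2 ((hpos j).lt_of_ne hj)

end Polyhedron

section Euclidean

variable {n m : ℕ}

lemma isExtremal_of_span_activeSet_eq_top {a : Fin m → Euc n} {b : Fin m → ℝ} {x : Euc n}
    (hx : x ∈ polyhedron a b) (hspan : Submodule.span ℝ (a '' activeSet a b x) = ⊤) :
    IsExtremal (polyhedron a b) x := by
  refine ⟨hx, fun x₁ h₁ x₂ h₂ t ht0 ht1 hx_eq => ?_⟩
  have h_orth : x₁ - x₂ ∈ (Submodule.span ℝ (a '' activeSet a b x))ᗮ := by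
    rw [mem_orthogonal_span_iff, Set.forall_mem_image]
    intro i hi
    have hxi : ⟪a i, x⟫ = b i := by simpa [activeSet] using hi
    rw [hx_eq, inner_add_right, real_inner_smul_right, real_inner_smul_right] at hxi
    -- an active constraint stays active at both ends of a segment through `x`
    have h₁i : ⟪a i, x₁⟫ = b i := by
      nlinarith [h₁ i, h₂ i, mul_nonneg (sub_nonneg.2 ht1.le) (sub_nonneg.2 (h₁ i))]
    rw [inner_sub_right, h₁i]
    nlinarith [h₁ i, h₂ i]
  rwa [hspan, Submodule.top_orthogonal_eq_bot, Submodule.mem_bot, sub_eq_zero] at h_orth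

lemma exists_isExtremal_isMinOn {a : Fin m → Euc n} {b : Fin m → ℝ} {c x : Euc n}
    (hrank : Submodule.span ℝ (range a) = ⊤) (hx : x ∈ polyhedron a b)
    (hmin : IsMinOn (⟪c, ·⟫) (polyhedron a b) x) :
    ∃ w, IsExtremal (polyhedron a b) w ∧ IsMinOn (⟪c, ·⟫) (polyhedron a b) w := by
  obtain ⟨w, ⟨hw, hw_min⟩, hw_max⟩ := Set.Finite.exists_maximalFor' (activeSet a b)
    {y | y ∈ polyhedron a b ∧ IsMinOn (⟪c, ·⟫) (polyhedron a b) y} (Set.toFinite _) ⟨x, hx, hmin⟩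
  refine ⟨w, isExtremal_of_span_activeSet_eq_top hw (by_contra fun hspan => ?_), hw_min⟩
  obtain ⟨s, hcs, hs, hpos⟩ := exists_descent_direction hrank hw hw_min hspan
  obtain ⟨T, hT, hmem, hssub⟩ := exists_add_smul_mem_activeSet_ssubset hw hs hpos
  have hmin' : IsMinOn (⟪c, ·⟫) (polyhedron a b) (w + T • s) := isMinOn_iff.2 fun y hy => by
    have := isMinOn_iff.1 hw_min y hy
    simp only [inner_add_right, real_inner_smul_right] at this ⊢
    nlinarith
  exact hssub.not_ge (hw_max ⟨hmem, hmin'⟩ hssub.le)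

variable {E : Set (Euc n)} {c w : Euc n}

lemma sub_mem_peanoTangentCone (hE : Convex ℝ E) (hw : w ∈ E) {x : Euc n} (hx : x ∈ E) :
    x - w ∈ PeanoTangentCone E w := by
  have ht : Tendsto (fun k : ℕ => 1 / ((k : ℝ) + 1)) atTop (𝓝 0) :=
    tendsto_one_div_add_atTop_nhds_zero_nat
  refine ⟨fun k => w + (1 / ((k : ℝ) + 1)) • (x - w), fun k => (k : ℝ) + 1,
    fun k => hE.add_smul_sub_mem hw hx ⟨by positivity, ?_⟩, fun k => by positivity, ?_, ?_⟩
  · rw [div_le_one (by positivity)]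
    linarith [k.cast_nonneg (α := ℝ)]
  · simpa using (ht.smul_const (x - w)).const_add w
  · have hk : ∀ k : ℕ, ((k : ℝ) + 1) • (w + (1 / ((k : ℝ) + 1)) • (x - w) - w) = x - w :=
      fun k => by rw [add_sub_cancel_left, smul_smul, mul_one_div_cancel (by positivity), one_smul]
    simp only [hk, tendsto_const_nhds]

lemma neg_mem_normalCone_of_isMinOn (hmin : IsMinOn (⟪c, ·⟫) E w) : -c ∈ NormalCone E w := by
  rintro v ⟨x, l, hxE, hl, -, hv⟩
  have hle : ∀ k, ⟪l k • (x k - w), -c⟫ ≤ 0 := fun k => by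
    rw [real_inner_smul_left, inner_neg_right, inner_sub_left, real_inner_comm c (x k),
      real_inner_comm c w]
    exact mul_nonpos_of_nonneg_of_nonpos (hl k).le
      (neg_nonpos.2 (sub_nonneg.2 (isMinOn_iff.1 hmin (x k) (hxE k))))
  exact le_of_tendsto (hv.inner tendsto_const_nhds) (Eventually.of_forall hle)

lemma isMinOn_iff_neg_mem_normalCone (hE : Convex ℝ E) (hw : w ∈ E) :
    IsMinOn (⟪c, ·⟫) E w ↔ -c ∈ NormalCone E w := by
  refine ⟨neg_mem_normalCone_of_isMinOn, fun h => isMinOn_iff.2 fun x hx => ?_⟩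
  have := h _ (sub_mem_peanoTangentCone hE hw hx)
  rw [inner_neg_right, inner_sub_left, real_inner_comm c x, real_inner_comm c w] at this
  linarith

end Euclidean

theorem stmt_4_general {n m : ℕ} (a : Fin m → Euc n) (b : Fin m → ℝ)
    (hrank : Submodule.span ℝ (Set.range a) = ⊤)
    (E : Set (Euc n)) (hE : E = {x | ∀ i, inner ℝ (a i) x ≤ b i})
    (c : Euc n) :
    ((∃ x₀ ∈ E, ∀ x ∈ E, inner ℝ c x₀ ≤ (inner ℝ c x : ℝ)) ↔
      -c ∈ ⋃ w ∈ {w | IsExtremal E w}, NormalCone E w) ∧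
    (∀ w, IsExtremal E w →
      ((∀ x ∈ E, inner ℝ c w ≤ (inner ℝ c x : ℝ)) ↔ -c ∈ NormalCone E w)) := by
  change E = polyhedron a b at hE
  subst hE
  have hmin_iff : ∀ w ∈ polyhedron a b,
      (∀ x ∈ polyhedron a b, ⟪c, w⟫ ≤ ⟪c, x⟫) ↔ -c ∈ NormalCone (polyhedron a b) w :=
    fun w hw => isMinOn_iff.symm.trans (isMinOn_iff_neg_mem_normalCone (convex_polyhedron a b) hw)
  refine ⟨⟨?_, ?_⟩, fun w hw => hmin_iff w hw.1⟩
  · rintro ⟨x₀, hx₀, hmin⟩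
    obtain ⟨w, hw, hw_min⟩ := exists_isExtremal_isMinOn hrank hx₀ (isMinOn_iff.2 hmin)
    exact mem_biUnion hw (neg_mem_normalCone_of_isMinOn hw_min)
  · rw [mem_iUnion₂]
    rintro ⟨w, hw, hc⟩
    exact ⟨w, hw.1, (hmin_iff w hw.1).2 hc⟩

theorem stmt_4 {n m : ℕ} (a : Fin m → Euc n) (b : Fin m → ℝ)
    (hrank : Submodule.span ℝ (Set.range a) = ⊤)
    (E : Set (Euc n)) (hE : E = {x | ∀ i, inner ℝ (a i) x ≤ b i}) (hne : E.Nonempty)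
    (c : Euc n) :
    ((∃ x₀ ∈ E, ∀ x ∈ E, inner ℝ c x₀ ≤ (inner ℝ c x : ℝ)) ↔
      -c ∈ ⋃ w ∈ {w | IsExtremal E w}, NormalCone E w) ∧
    (∀ w, IsExtremal E w →
      ((∀ x ∈ E, inner ℝ c w ≤ (inner ℝ c x : ℝ)) ↔ -c ∈ NormalCone E w)) :=
  stmt_4_general a b hrank E hE c
end
end

section
/- Let E = {x : A x ≤ b} be a nonempty polyhedron with E* ≠ ∅. Then E is unbounded if and only if the union over vertices w ∈ E* of the normal cones N_w(E) is not all of ℝⁿ. -/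
/-!
An unbounded set contains points `xₖ` with `‖xₖ‖ → ∞`; a limit `v` of `xₖ / ‖xₖ‖` is a unit vector
with `⟪aᵢ, v⟫ ≤ 0` for all `i`, so `w + t • v ∈ E` for every `w ∈ E` and `t ≥ 0`. Hence `v` is a
tangent direction at every vertex, and `⟪v, v⟫ > 0` keeps it out of every normal cone.
Conversely, a bounded `E` is compact, so `⟪u, ·⟫` attains its maximum on an exposed face of `E`;
by Krein–Milman that face has an extreme point `w`, which is then an extreme point of `E` with
`u ∈ N_w(E)`.
-/

open Filter Topology Metric Set

noncomputable section

theorem isExtremal_iff_mem_extremePoints {n : ℕ} {E : Set (Euc n)} {w : Euc n} :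
    IsExtremal E w ↔ w ∈ E.extremePoints ℝ := by
  simp only [IsExtremal, mem_extremePoints, openSegment_eq_image, mem_image, mem_Ioo]
  refine and_congr_right fun _ => ⟨fun h x₁ hx₁ x₂ hx₂ ⟨t, ⟨ht0, ht1⟩, hw⟩ => ?_,
    fun h x₁ hx₁ x₂ hx₂ t ht0 ht1 hw => ?_⟩
  · obtain rfl := h x₁ hx₁ x₂ hx₂ t ht0 ht1 hw.symm
    simp only [← add_smul, sub_add_cancel, one_smul] at hw
    exact ⟨hw, hw⟩
  · obtain ⟨h₁, h₂⟩ := h x₁ hx₁ x₂ hx₂ ⟨t, ⟨ht0, ht1⟩, hw.symm⟩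
    rw [h₁, h₂]

theorem mem_normalCone_of_forall_inner_le {n : ℕ} {E : Set (Euc n)} {w u : Euc n}
    (hmax : ∀ x ∈ E, inner ℝ u x ≤ inner ℝ u w) : u ∈ NormalCone E w := by
  rintro v ⟨x, l, hxE, hl, -, hlim⟩
  refine le_of_tendsto (hlim.inner tendsto_const_nhds) (Eventually.of_forall fun k => ?_)
  rw [real_inner_smul_left, real_inner_comm, inner_sub_right]
  exact mul_nonpos_of_nonneg_of_nonpos (hl k).le (sub_nonpos.2 (hmax _ (hxE k)))

theorem mem_peanoTangentCone_of_forall_add_smul_mem {n : ℕ} {E : Set (Euc n)} {w v : Euc n}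
    (h : ∀ t : ℝ, 0 < t → w + t • v ∈ E) : v ∈ PeanoTangentCone E w := by
  have hinv : Tendsto (fun k : ℕ => ((k : ℝ) + 1)⁻¹) atTop (𝓝 0) := by
    simpa using tendsto_one_div_add_atTop_nhds_zero_nat (𝕜 := ℝ)
  refine ⟨fun k => w + ((k : ℝ) + 1)⁻¹ • v, fun k => (k : ℝ) + 1,
    fun k => h _ (by positivity), fun k => by positivity, ?_, ?_⟩
  · simpa using tendsto_const_nhds.add (hinv.smul_const (v : Euc n))
  · refine tendsto_const_nhds.congr fun k => ?_
    rw [add_sub_cancel_left, smul_smul, mul_inv_cancel₀ (by positivity), one_smul]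

theorem notMem_normalCone_of_mem_peanoTangentCone {n : ℕ} {E : Set (Euc n)} {w v : Euc n}
    (hv : v ≠ 0) (hT : v ∈ PeanoTangentCone E w) : v ∉ NormalCone E w :=
  fun hN => hv (real_inner_self_nonpos.1 (hN v hT))

theorem exists_mem_extremePoints_forall_le_of_isCompact {F : Type*} [AddCommGroup F] [Module ℝ F]
    [TopologicalSpace F] [T2Space F] [IsTopologicalAddGroup F] [ContinuousSMul ℝ F]
    [LocallyConvexSpace ℝ F] {E : Set F} (hE : IsCompact E) (hne : E.Nonempty)
    (f : StrongDual ℝ F) : ∃ w ∈ E.extremePoints ℝ, ∀ x ∈ E, f x ≤ f w := by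
  obtain ⟨w₀, hw₀, hmax⟩ := hE.exists_isMaxOn hne f.continuous.continuousOn
  have hexp : IsExposed ℝ E {w ∈ E | ∀ x ∈ E, f x ≤ f w} := fun _ => ⟨f, rfl⟩
  obtain ⟨w, hw⟩ := (hexp.isCompact hE).extremePoints_nonempty ⟨w₀, hw₀, fun x hx => hmax hx⟩
  exact ⟨w, hexp.isExtreme.extremePoints_subset_extremePoints hw, (extremePoints_subset hw).2⟩

theorem exists_norm_eq_one_forall_le_zero_of_not_isBounded {F : Type*} [NormedAddCommGroup F]
    [NormedSpace ℝ F] [ProperSpace F] {E : Set F} (hE : ¬ Bornology.IsBounded E) :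
    ∃ v : F, ‖v‖ = 1 ∧ ∀ (f : StrongDual ℝ F) (c : ℝ), (∀ x ∈ E, f x ≤ c) → f v ≤ 0 := by
  have hfar : ∀ k : ℕ, ∃ x ∈ E, (k : ℝ) < ‖x‖ := by
    simp only [isBounded_iff_forall_norm_le, not_exists, not_forall, not_le, exists_prop] at hE
    exact fun k => hE k
  choose x hxE hxk using hfar
  have hpos : ∀ k, 0 < ‖x k‖ := fun k => (Nat.cast_nonneg k).trans_lt (hxk k)
  have hnorm : Tendsto (fun k => ‖x k‖) atTop atTop :=
    tendsto_atTop_mono (fun k => (hxk k).le) tendsto_natCast_atTop_atTop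
  obtain ⟨v, hv, φ, hφ, hlim⟩ := (isCompact_sphere (0 : F) 1).tendsto_subseq
    (x := fun k => ‖x k‖⁻¹ • x k) fun k => by simp [norm_smul, (hpos k).ne']
  refine ⟨v, by simpa using hv, fun f c hc => ?_⟩
  have hscaled : Tendsto (fun k => ‖x (φ k)‖⁻¹ * c) atTop (𝓝 0) := by
    simpa using ((hnorm.comp hφ.tendsto_atTop).inv_tendsto_atTop).mul_const c
  refine le_of_tendsto_of_tendsto ((f.continuous.tendsto v).comp hlim) hscaled
    (Eventually.of_forall fun k => ?_)
  simp only [Function.comp_apply, map_smul, smul_eq_mul]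
  exact mul_le_mul_of_nonneg_left (hc _ (hxE _)) (inv_nonneg.2 (norm_nonneg _))

section Polyhedron

variable {F ι : Type*} [NormedAddCommGroup F] [InnerProductSpace ℝ F] (a : ι → F) (b : ι → ℝ)

theorem isClosed_setOf_forall_inner_le : IsClosed {x : F | ∀ i, inner ℝ (a i) x ≤ b i} := by
  simp only [ofPred_forall]
  exact isClosed_iInter fun i => isClosed_le (continuous_const.inner continuous_id) continuous_const

theorem add_smul_mem_setOf_forall_inner_le {w v : F}
    (hw : w ∈ {x : F | ∀ i, inner ℝ (a i) x ≤ b i})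
    (hv : ∀ i, inner ℝ (a i) v ≤ 0) {t : ℝ} (ht : 0 ≤ t) :
    w + t • v ∈ {x : F | ∀ i, inner ℝ (a i) x ≤ b i} := fun i => by
  rw [inner_add_right, real_inner_smul_right]
  nlinarith [hw i, hv i]

end Polyhedron

theorem stmt_5_general {n m : ℕ} (a : Fin m → Euc n) (b : Fin m → ℝ)
    (E : Set (Euc n)) (hE : E = {x | ∀ i, inner ℝ (a i) x ≤ b i}) (hne : E.Nonempty) :
    ¬ Bornology.IsBounded E ↔
      (⋃ w ∈ {w | IsExtremal E w}, NormalCone E w) ≠ Set.univ := by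
  subst hE
  constructor
  · intro hunbdd hcover
    obtain ⟨v, hv, hrec⟩ := exists_norm_eq_one_forall_le_zero_of_not_isBounded hunbdd
    obtain ⟨w, hw, hN⟩ := mem_iUnion₂.1 (hcover ▸ mem_univ v)
    have hT : v ∈ PeanoTangentCone _ w := mem_peanoTangentCone_of_forall_add_smul_mem
      fun t ht => add_smul_mem_setOf_forall_inner_le a b hw.1
        (fun i => hrec (innerSL ℝ (a i)) (b i) fun x hx => hx i) ht.le
    exact notMem_normalCone_of_mem_peanoTangentCone (by simp [← norm_ne_zero_iff, hv]) hT hN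
  · intro hcover hbdd
    refine hcover (eq_univ_of_forall fun u => ?_)
    have hcompact := isCompact_of_isClosed_isBounded (isClosed_setOf_forall_inner_le a b) hbdd
    obtain ⟨w, hw, hmax⟩ :=
      exists_mem_extremePoints_forall_le_of_isCompact hcompact hne (innerSL ℝ u)
    exact mem_iUnion₂.2 ⟨w, isExtremal_iff_mem_extremePoints.2 hw,
      mem_normalCone_of_forall_inner_le fun x hx => by simpa using hmax x hx⟩

theorem stmt_5 {n m : ℕ} (a : Fin m → Euc n) (b : Fin m → ℝ) (ha : a ≠ 0)
    (E : Set (Euc n)) (hE : E = {x | ∀ i, inner ℝ (a i) x ≤ b i}) (hne : E.Nonempty)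
    (hstar : {w | IsExtremal E w}.Nonempty) :
    ¬ Bornology.IsBounded E ↔
      (⋃ w ∈ {w | IsExtremal E w}, NormalCone E w) ≠ Set.univ :=
  stmt_5_general a b E hE hne
end
end

section
/- Let f(x) = ⟨c, x⟩ be a linear functional on ℝⁿ and C ⊂ ℝⁿ a nonempty closed set with affine hull V. Then f attains its infimum over C if and only if there exists a point x₀ in the relative boundary of C (the boundary of C computed within V) with f(x₀) = inf_{x ∈ C} f(x), or C has empty relative boundary (i.e. C = V) and f is constant on C. -/
open Filter Topology Metric Set

noncomputable section

/-! If an affine function attains its minimum over `C` at a point `x₀` of the relative interior,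
then for every `x ∈ C` the line through `x` and `x₀` stays in `C` slightly beyond `x₀`; the value
there is `f x₀ + t (f x₀ - f x)` with `t > 0`, so minimality forces `f x ≤ f x₀`, and `f` is
constant on `C`. Otherwise a minimizer lies in `C` minus its relative interior, which for closed `C`
is the relative boundary. -/

theorem IsMinOn.eq_of_mem_intrinsicInterior {E : Type*} [NormedAddCommGroup E] [NormedSpace ℝ E]
    {f : E →ᵃ[ℝ] ℝ} {C : Set E} {x₀ : E} (hmin : IsMinOn f C x₀)
    (hx₀ : x₀ ∈ intrinsicInterior ℝ C) {x : E} (hx : x ∈ C) : f x = f x₀ := by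
  obtain ⟨y, hy, rfl⟩ := mem_intrinsicInterior.1 hx₀
  let g : ℝ → affineSpan ℝ C := fun t =>
    ⟨AffineMap.lineMap x y t, AffineMap.lineMap_mem t (subset_affineSpan ℝ C hx) y.2⟩
  have hg : Continuous g := AffineMap.lineMap_continuous.subtype_mk _
  have hg1 : g 1 = y := Subtype.ext (AffineMap.lineMap_apply_one _ _)
  obtain ⟨t, ht, htC⟩ : ∃ t : ℝ, 1 < t ∧ AffineMap.lineMap x (y : E) t ∈ C :=
    have hnear : g ⁻¹' ((↑) ⁻¹' C) ∈ 𝓝 1 :=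
      hg.continuousAt.preimage_mem_nhds (hg1 ▸ mem_interior_iff_mem_nhds.1 hy)
    Eventually.exists_gt hnear
  have hfar : f y ≤ f (AffineMap.lineMap x (y : E) t) := hmin htC
  rw [AffineMap.apply_lineMap, AffineMap.lineMap_apply_ring'] at hfar
  have hxy : f y ≤ f x := hmin hx
  nlinarith

theorem stmt_6 {n : ℕ} (c : Euc n) (C : Set (Euc n)) (hC : IsClosed C) (hne : C.Nonempty) :
    (∃ x₀ ∈ C, ∀ x ∈ C, inner ℝ c x₀ ≤ (inner ℝ c x : ℝ)) ↔
      ((∃ x₀ ∈ intrinsicFrontier ℝ C, x₀ ∈ C ∧ ∀ x ∈ C, inner ℝ c x₀ ≤ (inner ℝ c x : ℝ)) ∨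
       (intrinsicFrontier ℝ C = ∅ ∧ ∀ x ∈ C, ∀ y ∈ C, (inner ℝ c x : ℝ) = inner ℝ c y)) := by
  constructor
  · rintro ⟨x₀, hx₀C, hmin⟩
    by_cases hint : x₀ ∈ intrinsicInterior ℝ C
    · have hconst : ∀ x ∈ C, inner ℝ c x = inner ℝ c x₀ := fun x hx =>
        IsMinOn.eq_of_mem_intrinsicInterior (f := (innerₛₗ ℝ c).toAffineMap)
          (isMinOn_iff.2 hmin) hint hx
      rcases (intrinsicFrontier ℝ C).eq_empty_or_nonempty with hfr | ⟨z, hz⟩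
      · exact Or.inr ⟨hfr, fun x hx y hy => (hconst x hx).trans (hconst y hy).symm⟩
      · have hzC : z ∈ C := intrinsicFrontier_subset hC hz
        exact Or.inl ⟨z, hz, hzC, fun x hx => (hconst z hzC).trans_le (hmin x hx)⟩
    · have hfr : x₀ ∈ intrinsicFrontier ℝ C :=
        closure_sdiff_intrinsicInterior (𝕜 := ℝ) C ▸ ⟨subset_closure hx₀C, hint⟩
      exact Or.inl ⟨x₀, hfr, hx₀C, hmin⟩
  · rintro (⟨x₀, -, hx₀C, hmin⟩ | ⟨-, hconst⟩)
    · exact ⟨x₀, hx₀C, hmin⟩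
    · obtain ⟨x₀, hx₀⟩ := hne
      exact ⟨x₀, hx₀, fun x hx => (hconst x₀ hx₀ x hx).le⟩
end
end
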